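/- Let ε > 0 and set x*(ε) = (ε·e^ε + sqrt(2 − (4 − ε²)·e^ε + 2·e^{2ε})) / (ε·e^ε − ε). Then for every real x ≥ 1, |f_ε(x)| ≤ f_ε(x*(ε)), where f_ε(x) = x·(g_ε(x − 1) − g_ε(x)) + (1 − g_ε(x − 1)) and g_ε(x) = (exp(−ε·x)/2)·(1 + ε·x/2). (In particular the quantity 2 − (4 − ε²)·e^ε + 2·e^{2ε} under the square root is nonnegative and the denominator ε·e^ε − ε is positive.) -/

import Mathlib

/-!
Write `A = e^ε`. The derivative of `f_ε` is `e^{-εx}/2` times the concave quadratic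
`Q(x) = (A - 1) + ε²/2 · (x² - A(x - 1)²)`, whose larger root is `x*(ε)`; since `Q(1) > 0`,
`f_ε` increases on `[1, x*]` and decreases on `[x*, ∞)`. On the other hand `g_ε` decreases on
`[0, ∞)` from `g_ε(0) = 1/2`, so `f_ε ≥ 1/2` on `[1, ∞)` and the absolute value is harmless.
-/

open Real

/-- `g_ε(x) = (exp(−ε·x)/2)·(1 + ε·x/2)`. -/
noncomputable def gFn (ε x : ℝ) : ℝ := Real.exp (-ε * x) / 2 * (1 + ε * x / 2)

/-- `f_ε(x) = x·(g_ε(x − 1) − g_ε(x)) + (1 − g_ε(x − 1))`. -/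
noncomputable def fFn (ε x : ℝ) : ℝ :=
  x * (gFn ε (x - 1) - gFn ε x) + (1 - gFn ε (x - 1))

/-- `x*(ε) = (ε·e^ε + sqrt(2 − (4 − ε²)·e^ε + 2·e^{2ε})) / (ε·e^ε − ε)`. -/
noncomputable def xstar (ε : ℝ) : ℝ :=
  (ε * Real.exp ε + Real.sqrt (2 - (4 - ε ^ 2) * Real.exp ε + 2 * Real.exp (2 * ε))) /
    (ε * Real.exp ε - ε)

open Set

noncomputable def critQuad (ε x : ℝ) : ℝ :=
  (exp ε - 1) + ε ^ 2 / 2 * (x ^ 2 - exp ε * (x - 1) ^ 2)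

lemma gFn_hasDerivAt (ε y : ℝ) :
    HasDerivAt (gFn ε) (-(ε / 4) * exp (-ε * y) * (1 + ε * y)) y := by
  have hexp : HasDerivAt (fun y => exp (-ε * y)) (exp (-ε * y) * -ε) y := by
    simpa using ((hasDerivAt_id y).const_mul (-ε)).exp
  have hlin : HasDerivAt (fun y => 1 + ε * y / 2) (ε / 2) y := by
    simpa using (((hasDerivAt_id y).const_mul ε).div_const 2).const_add 1
  exact ((hexp.div_const 2).mul hlin).congr_deriv (by ring)

lemma gFn_zero (ε : ℝ) : gFn ε 0 = 1 / 2 := by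
  simp [gFn]

lemma gFn_antitoneOn {ε : ℝ} (hε : 0 ≤ ε) : AntitoneOn (gFn ε) (Ici 0) := by
  refine antitoneOn_of_hasDerivWithinAt_nonpos (convex_Ici 0)
    (fun y _ => (gFn_hasDerivAt ε y).continuousAt.continuousWithinAt)
    (fun y _ => (gFn_hasDerivAt ε y).hasDerivWithinAt) fun y hy => ?_
  rw [interior_Ici, mem_Ioi] at hy
  have : 0 ≤ ε / 4 * exp (-ε * y) * (1 + ε * y) := by positivity
  linarith

lemma half_le_fFn {ε x : ℝ} (hε : 0 ≤ ε) (hx : 1 ≤ x) : 1 / 2 ≤ fFn ε x := by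
  have hx1 : x - 1 ∈ Ici (0 : ℝ) := sub_nonneg.mpr hx
  have hdrop : gFn ε x ≤ gFn ε (x - 1) :=
    gFn_antitoneOn hε hx1 (mem_Ici.mpr (by linarith)) (by linarith)
  have hstart : gFn ε (x - 1) ≤ 1 / 2 := gFn_zero ε ▸ gFn_antitoneOn hε self_mem_Ici hx1 hx1
  have : 0 ≤ x * (gFn ε (x - 1) - gFn ε x) := mul_nonneg (by linarith) (by linarith)
  unfold fFn
  linarith

lemma fFn_hasDerivAt (ε x : ℝ) :
    HasDerivAt (fFn ε) (exp (-ε * x) / 2 * critQuad ε x) x := by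
  have hshift := (gFn_hasDerivAt ε (x - 1)).comp_sub_const x 1
  have hexp : exp (-ε * (x - 1)) = exp ε * exp (-ε * x) := by
    rw [← exp_add]; ring_nf
  refine (((hasDerivAt_id x).mul (hshift.sub (gFn_hasDerivAt ε x))).add
    ((hasDerivAt_const x (1 : ℝ)).sub hshift)).congr_deriv ?_
  simp only [gFn, critQuad, id_eq, Pi.sub_apply, hexp]
  ring

lemma radicand_eq (ε : ℝ) :
    2 - (4 - ε ^ 2) * exp ε + 2 * exp (2 * ε) = ε ^ 2 * exp ε + 2 * (exp ε - 1) ^ 2 := by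
  rw [two_mul ε, exp_add]
  ring

lemma radicand_nonneg (ε : ℝ) : 0 ≤ 2 - (4 - ε ^ 2) * exp ε + 2 * exp (2 * ε) := by
  rw [radicand_eq]
  positivity

lemma xstar_denom_pos {ε : ℝ} (hε : 0 < ε) : 0 < ε * exp ε - ε := by
  nlinarith [one_lt_exp_iff.mpr hε]

lemma xstar_eq (ε : ℝ) :
    xstar ε = (ε * exp ε + √(ε ^ 2 * exp ε + 2 * (exp ε - 1) ^ 2)) / (ε * (exp ε - 1)) := by
  rw [xstar, radicand_eq, mul_sub_one]

lemma critQuad_xstar {ε : ℝ} (hε : ε ≠ 0) : critQuad ε (xstar ε) = 0 := by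
  have hA : exp ε - 1 ≠ 0 := sub_ne_zero.mpr (mt (exp_eq_one_iff ε).mp hε)
  have hs := sq_sqrt (radicand_eq ε ▸ radicand_nonneg ε)
  rw [critQuad, xstar_eq]
  generalize √(ε ^ 2 * exp ε + 2 * (exp ε - 1) ^ 2) = s at hs ⊢
  field_simp
  linear_combination (1 - exp ε) * hs

lemma critQuad_eq_mul {ε : ℝ} (hε : ε ≠ 0) (x : ℝ) :
    critQuad ε x = (xstar ε - x) *
      (ε ^ 2 * (exp ε - 1) / 2 * (x + xstar ε) - ε ^ 2 * exp ε) := by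
  have h := critQuad_xstar hε
  unfold critQuad at h ⊢
  linear_combination h

lemma critQuad_cofactor_pos {ε x : ℝ} (hε : 0 < ε) (hx : 1 ≤ x) :
    0 < ε ^ 2 * (exp ε - 1) / 2 * (x + xstar ε) - ε ^ 2 * exp ε := by
  set s := √(ε ^ 2 * exp ε + 2 * (exp ε - 1) ^ 2) with hs
  have hA : 0 < exp ε - 1 := sub_pos.mpr (one_lt_exp_iff.mpr hε)
  have hεs : ε < s := (lt_sqrt hε.le).mpr (by nlinarith [exp_pos ε])
  have hxstar : ε ^ 2 * (exp ε - 1) / 2 * xstar ε = ε * (ε * exp ε + s) / 2 := by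
    rw [xstar_eq, ← hs]
    field_simp
  rw [mul_add, hxstar]
  nlinarith [mul_pos (mul_pos hε hε) hA]

lemma one_lt_xstar {ε : ℝ} (hε : 0 < ε) : 1 < xstar ε := by
  have h := critQuad_eq_mul hε.ne' 1
  have hQ1 : 0 < critQuad ε 1 := by
    simp only [critQuad]
    nlinarith [one_lt_exp_iff.mpr hε]
  nlinarith [critQuad_cofactor_pos hε le_rfl]

lemma fFn_monotoneOn {ε : ℝ} (hε : 0 < ε) : MonotoneOn (fFn ε) (Icc 1 (xstar ε)) := by
  refine monotoneOn_of_hasDerivWithinAt_nonneg (convex_Icc _ _)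
    (fun x _ => (fFn_hasDerivAt ε x).continuousAt.continuousWithinAt)
    (fun x _ => (fFn_hasDerivAt ε x).hasDerivWithinAt) fun x hx => ?_
  rw [interior_Icc] at hx
  rw [critQuad_eq_mul hε.ne']
  have := critQuad_cofactor_pos hε hx.1.le
  have := sub_pos.mpr hx.2
  positivity

lemma fFn_antitoneOn {ε : ℝ} (hε : 0 < ε) : AntitoneOn (fFn ε) (Ici (xstar ε)) := by
  refine antitoneOn_of_hasDerivWithinAt_nonpos (convex_Ici _)
    (fun x _ => (fFn_hasDerivAt ε x).continuousAt.continuousWithinAt)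
    (fun x _ => (fFn_hasDerivAt ε x).hasDerivWithinAt) fun x hx => ?_
  rw [interior_Ici, mem_Ioi] at hx
  rw [critQuad_eq_mul hε.ne']
  have hcof := critQuad_cofactor_pos hε ((one_lt_xstar hε).trans hx).le
  exact mul_nonpos_of_nonneg_of_nonpos (by positivity)
    (mul_nonpos_of_nonpos_of_nonneg (by linarith) hcof.le)

/-- The maximum of `|f_ε|` on `[1, ∞)` is attained at `x*(ε)`; moreover the radicand in
`x*(ε)` is nonnegative and its denominator is positive. -/
theorem abs_fFn_le_fFn_xstar (ε : ℝ) (hε : 0 < ε) :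
    0 ≤ 2 - (4 - ε ^ 2) * Real.exp ε + 2 * Real.exp (2 * ε) ∧
    0 < ε * Real.exp ε - ε ∧
    ∀ x : ℝ, 1 ≤ x → |fFn ε x| ≤ fFn ε (xstar ε) := by
  refine ⟨radicand_nonneg ε, xstar_denom_pos hε, fun x hx => ?_⟩
  rw [abs_of_nonneg ((half_le_fFn hε.le hx).trans' (by norm_num))]
  rcases le_total x (xstar ε) with hle | hge
  · exact fFn_monotoneOn hε ⟨hx, hle⟩ ⟨(one_lt_xstar hε).le, le_rfl⟩ hle
  · exact fFn_antitoneOn hε self_mem_Ici hge hge
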